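/- Let X_n be a Markov chain on ℝ with jumps ξ(x). Suppose (i) there exist A > 0, ε > 0 with inf_x E[min(ξ(x), A)] = ε > 0, and (ii) δ := inf_x P{X_n > x for all n ≥ 1 | X₀ = x} > 0. Then the renewal measure H_y(x, x+h] := Σ_{n=0}^∞ P{X_n ∈ (x, x+h] | X₀ = y} satisfies H_y(x, x+h] ≤ (A+h)/(ε·δ) for all x, y ∈ ℝ and h > 0. -/

import Mathlib

open MeasureTheory ProbabilityTheory

/-- `kIterId K n` is the `n`-fold composition `Kⁿ` of the kernel `K`
(with `K⁰` the identity kernel). -/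
noncomputable def kIterId (K : Kernel ℝ ℝ) : ℕ → Kernel ℝ ℝ
  | 0 => Kernel.id
  | n + 1 => (kIterId K n) ∘ₖ K

/-!
Let `M` be the largest expected number of visits to `I = (x, x + h]` during the first `n` steps,
over all starting points. Up to its first exit above `x + h`, the chain drives the Lyapunov
function `A + h - min ((X - x)⁺, A + h)`, which takes values in `[0, A + h]`, down by at least `ε`
in expectation at each visit to `I`; so the chain killed at that exit makes at most `(A + h) / ε`
visits. From a point above `x + h` the chain never returns below it with probability at least `δ`,
so the visits after the exit contribute at most `M (1 - δ)`. Thus `M ≤ (A + h) / ε + M (1 - δ)`,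
and as `M ≤ n` is finite, `M ≤ (A + h) / (ε δ)`.
-/

open Set
open scoped ENNReal

section KernelPowers

variable {K L : Kernel ℝ ℝ} {s : Set ℝ}

lemma kIterId_zero_apply (z : ℝ) (hs : MeasurableSet s) :
    kIterId K 0 z s = s.indicator 1 z := by
  simp [kIterId, Kernel.id_apply, Measure.dirac_apply' _ hs]

lemma kIterId_succ_apply (n : ℕ) (z : ℝ) (hs : MeasurableSet s) :
    kIterId K (n + 1) z s = ∫⁻ w, kIterId K n w s ∂(K z) :=
  Kernel.comp_apply' _ _ _ hs

lemma kIterId_mono (hKL : ∀ z, K z ≤ L z) (n : ℕ) (z : ℝ) (hs : MeasurableSet s) :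
    kIterId K n z s ≤ kIterId L n z s := by
  induction n generalizing z with
  | zero => rfl
  | succ n ih =>
    rw [kIterId_succ_apply _ _ hs, kIterId_succ_apply _ _ hs]
    exact lintegral_mono' (hKL z) fun w => ih w

lemma kIterId_restrict_mono {t u : Set ℝ} (hs : MeasurableSet s) (ht : MeasurableSet t)
    (hst : s ⊆ t) (n : ℕ) (z : ℝ) (hu : MeasurableSet u) :
    kIterId (K.restrict hs) n z u ≤ kIterId (K.restrict ht) n z u :=
  kIterId_mono (fun w => by
    simp only [Kernel.restrict_apply]
    exact Measure.restrict_mono hst le_rfl) n z hu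

instance isMarkovKernel_kIterId [IsMarkovKernel K] (n : ℕ) : IsMarkovKernel (kIterId K n) := by
  induction n with
  | zero => exact inferInstanceAs (IsMarkovKernel Kernel.id)
  | succ n ih => exact inferInstanceAs (IsMarkovKernel (kIterId K n ∘ₖ K))

end KernelPowers

-- The expected number of visits to `s` at times `0, …, n - 1` of the chain started at `z`.
noncomputable def occupation (K : Kernel ℝ ℝ) (s : Set ℝ) (n : ℕ) (z : ℝ) : ℝ≥0∞ :=
  ∑ m ∈ Finset.range n, kIterId K m z s

section Occupation

variable {K : Kernel ℝ ℝ} {s : Set ℝ}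

@[simp]
lemma occupation_zero (z : ℝ) : occupation K s 0 z = 0 := by
  simp [occupation]

lemma occupation_succ (hs : MeasurableSet s) (n : ℕ) (z : ℝ) :
    occupation K s (n + 1) z = s.indicator 1 z + ∫⁻ w, occupation K s n w ∂(K z) := by
  simp only [occupation]
  rw [Finset.sum_range_succ', kIterId_zero_apply _ hs, add_comm,
    lintegral_finsetSum _ fun _ _ => Kernel.measurable_coe _ hs]
  simp only [kIterId_succ_apply _ _ hs]

lemma measurable_occupation (hs : MeasurableSet s) (n : ℕ) : Measurable (occupation K s n) :=
  Finset.measurable_sum _ fun _ _ => Kernel.measurable_coe _ hs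

lemma occupation_le_succ (n : ℕ) (z : ℝ) : occupation K s n z ≤ occupation K s (n + 1) z :=
  Finset.sum_le_sum_of_subset (Finset.range_subset_range.2 n.le_succ)

lemma occupation_le_card [IsMarkovKernel K] (n : ℕ) (z : ℝ) : occupation K s n z ≤ n := by
  calc occupation K s n z ≤ ∑ _ ∈ Finset.range n, (1 : ℝ≥0∞) :=
        Finset.sum_le_sum fun _ _ => prob_le_one
    _ = n := by simp

lemma mul_occupation_le_of_excessive {F : ℝ → ℝ≥0∞} {c : ℝ≥0∞} (hs : MeasurableSet s)
    (hF : ∀ z, c * s.indicator 1 z + ∫⁻ w, F w ∂(K z) ≤ F z) (n : ℕ) (z : ℝ) :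
    c * occupation K s n z ≤ F z := by
  induction n generalizing z with
  | zero => simp
  | succ n ih =>
    calc c * occupation K s (n + 1) z
        = c * s.indicator 1 z + ∫⁻ w, c * occupation K s n w ∂(K z) := by
          rw [occupation_succ hs, mul_add, lintegral_const_mul _ (measurable_occupation hs n)]
      _ ≤ c * s.indicator 1 z + ∫⁻ w, F w ∂(K z) := by gcongr with w; exact ih w
      _ ≤ F z := hF z

end Occupation

section FirstPassage

variable {P : Kernel ℝ ℝ} [IsMarkovKernel P] {s : Set ℝ}

-- `kIterId (P.restrict hT) n z univ` is the probability of staying in `T` up to time `n`,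
-- during which `s` is not visited.
lemma occupation_add_mul_survival_le {T : Set ℝ} (hs : MeasurableSet s) (hT : MeasurableSet T)
    (hsT : Disjoint s T) {M : ℝ≥0∞} {n : ℕ} (hM : ∀ w, occupation P s n w ≤ M) {z : ℝ}
    (hz : z ∈ T) : occupation P s n z + M * kIterId (P.restrict hT) n z univ ≤ M := by
  induction n generalizing z with
  | zero => simp [kIterId_zero_apply _ MeasurableSet.univ]
  | succ n ih =>
    have hM' : ∀ w, occupation P s n w ≤ M := fun w => (occupation_le_succ n w).trans (hM w)
    calc occupation P s (n + 1) z + M * kIterId (P.restrict hT) (n + 1) z univ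
        = ∫⁻ w in T, (occupation P s n w + M * kIterId (P.restrict hT) n w univ) ∂(P z)
          + ∫⁻ w in Tᶜ, occupation P s n w ∂(P z) := by
          rw [occupation_succ hs, indicator_of_notMem (hsT.notMem_of_mem_right hz), zero_add,
            kIterId_succ_apply _ _ MeasurableSet.univ, Kernel.restrict_apply,
            ← lintegral_add_compl _ hT, lintegral_add_left (measurable_occupation hs n),
            lintegral_const_mul _ (Kernel.measurable_coe _ MeasurableSet.univ)]
          ring
      _ ≤ ∫⁻ _ in T, M ∂(P z) + ∫⁻ _ in Tᶜ, M ∂(P z) :=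
          add_le_add (setLIntegral_mono measurable_const fun w hw => ih hM' hw)
            (setLIntegral_mono measurable_const fun w _ => hM' w)
      _ = M := by rw [lintegral_add_compl _ hT, lintegral_const, measure_univ, mul_one]

lemma occupation_le_killed_add {U : Set ℝ} (hs : MeasurableSet s) (hU : MeasurableSet U)
    {B : ℝ≥0∞} {n : ℕ} (hB : ∀ w ∉ U, occupation P s n w ≤ B) (z : ℝ) :
    occupation P s n z ≤ occupation (P.restrict hU) s n z + B := by
  induction n generalizing z with
  | zero => simp
  | succ n ih =>
    have hB' : ∀ w ∉ U, occupation P s n w ≤ B := fun w hw =>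
      (occupation_le_succ n w).trans (hB w hw)
    have hsplit : ∫⁻ _ in U, B ∂(P z) + ∫⁻ _ in Uᶜ, B ∂(P z) = B := by
      rw [lintegral_add_compl _ hU, lintegral_const, measure_univ, mul_one]
    calc occupation P s (n + 1) z
        = s.indicator 1 z + (∫⁻ w in U, occupation P s n w ∂(P z)
          + ∫⁻ w in Uᶜ, occupation P s n w ∂(P z)) := by
          rw [occupation_succ hs, lintegral_add_compl _ hU]
      _ ≤ s.indicator 1 z + (∫⁻ w in U, (occupation (P.restrict hU) s n w + B) ∂(P z)
          + ∫⁻ _ in Uᶜ, B ∂(P z)) := by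
          gcongr 2
          · exact setLIntegral_mono ((measurable_occupation hs n).add_const B) fun w _ => ih hB' w
          · exact setLIntegral_mono measurable_const fun w hw => hB' w hw
      _ = occupation (P.restrict hU) s (n + 1) z + B := by
          rw [occupation_succ hs, Kernel.restrict_apply, lintegral_add_right _ measurable_const,
            add_assoc _ (∫⁻ _ in U, B ∂(P z)), hsplit, add_assoc]

end FirstPassage

section Drift

variable {A x h : ℝ}

lemma integrable_min_max_sub {μ : Measure ℝ} [IsFiniteMeasure μ] (hAh : 0 ≤ A + h) :
    Integrable (fun w => min (max (w - x) 0) (A + h)) μ := by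
  refine Integrable.of_bound (by fun_prop) (A + h) (ae_of_all _ fun w => ?_)
  rw [Real.norm_eq_abs, abs_le]
  exact ⟨by linarith [le_min (le_max_right (w - x) 0) hAh], min_le_right _ _⟩

lemma add_le_integral_min_max_sub {μ : Measure ℝ} [IsProbabilityMeasure μ] {ε z : ℝ}
    (hA : 0 ≤ A) (hz : z ∈ Ioc x (x + h)) (hint : Integrable (fun w => min (w - z) A) μ)
    (hdrift : ε ≤ ∫ w, min (w - z) A ∂μ) :
    z - x + ε ≤ ∫ w, min (max (w - x) 0) (A + h) ∂μ := by
  have hpoint : ∀ w, z - x + min (w - z) A ≤ min (max (w - x) 0) (A + h) := fun w =>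
    le_min (le_max_of_le_left (by linarith [min_le_left (w - z) A]))
      (by linarith [min_le_right (w - z) A, hz.2])
  calc z - x + ε ≤ ∫ w, (z - x + min (w - z) A) ∂μ := by
        rw [integral_add (integrable_const _) hint, integral_const, probReal_univ, one_smul]
        linarith
    _ ≤ _ := integral_mono ((integrable_const _).add hint)
        (integrable_min_max_sub (by linarith [hz.1, hz.2])) hpoint

end Drift

/-- Above `x + h`, where the killed chain has died, this takes its maximum `A + h`, which keeps it
excessive there. -/
noncomputable def killedLyapunov (A x h w : ℝ) : ℝ≥0∞ :=
  ENNReal.ofReal (A + h - (Iic (x + h)).indicator (fun w => min (max (w - x) 0) (A + h)) w)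

section KilledLyapunov

variable {A x h : ℝ}

lemma killedLyapunov_le (hAh : 0 ≤ A + h) (w : ℝ) :
    killedLyapunov A x h w ≤ ENNReal.ofReal (A + h) :=
  ENNReal.ofReal_le_ofReal <| sub_le_self _ <|
    indicator_nonneg (fun _ _ => le_min (le_max_right _ _) hAh) w

lemma killedLyapunov_of_notMem (hAh : 0 ≤ A + h) {w : ℝ} (hw : w ∉ Ioc x (x + h)) :
    killedLyapunov A x h w = ENNReal.ofReal (A + h) := by
  by_cases hwh : w ≤ x + h
  · have hwx : w ≤ x := not_lt.1 fun hxw => hw ⟨hxw, hwh⟩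
    simp [killedLyapunov, indicator_of_mem (mem_Iic.2 hwh), max_eq_right (sub_nonpos.2 hwx),
      min_eq_left hAh]
  · simp [killedLyapunov, indicator_of_notMem (mt mem_Iic.1 hwh)]

lemma killedLyapunov_of_mem (hA : 0 ≤ A) {w : ℝ} (hw : w ∈ Ioc x (x + h)) :
    killedLyapunov A x h w = ENNReal.ofReal (A + h - (w - x)) := by
  simp [killedLyapunov, indicator_of_mem (mem_Iic.2 hw.2), max_eq_left (sub_nonneg.2 hw.1.le),
    min_eq_left (show w - x ≤ A + h by linarith [hw.2])]

lemma setLIntegral_Iic_killedLyapunov_le {μ : Measure ℝ} [IsFiniteMeasure μ] (hAh : 0 ≤ A + h) :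
    ∫⁻ w in Iic (x + h), killedLyapunov A x h w ∂μ
      ≤ ENNReal.ofReal (∫ w, (A + h - min (max (w - x) 0) (A + h)) ∂μ) := by
  have hint : Integrable (fun w => A + h - min (max (w - x) 0) (A + h)) μ :=
    (integrable_const _).sub (integrable_min_max_sub hAh)
  rw [ofReal_integral_eq_lintegral_ofReal hint
    (ae_of_all _ fun w => sub_nonneg.2 (min_le_right _ _))]
  calc ∫⁻ w in Iic (x + h), killedLyapunov A x h w ∂μ
      = ∫⁻ w in Iic (x + h), ENNReal.ofReal (A + h - min (max (w - x) 0) (A + h)) ∂μ :=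
        setLIntegral_congr_fun measurableSet_Iic fun w hw => by
          rw [killedLyapunov, indicator_of_mem hw]
    _ ≤ _ := setLIntegral_le_lintegral _ _

lemma killedLyapunov_excessive {P : Kernel ℝ ℝ} [IsMarkovKernel P] {ε : ℝ} (hA : 0 ≤ A)
    (hε : 0 ≤ ε) (hh : 0 ≤ h)
    (hdrift_int : ∀ z ∈ Ioc x (x + h), Integrable (fun w => min (w - z) A) (P z))
    (hdrift : ∀ z ∈ Ioc x (x + h), ε ≤ ∫ w, min (w - z) A ∂(P z)) (z : ℝ) :
    ENNReal.ofReal ε * (Ioc x (x + h)).indicator 1 z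
      + ∫⁻ w, killedLyapunov A x h w ∂(P.restrict (measurableSet_Iic (a := x + h)) z)
      ≤ killedLyapunov A x h z := by
  have hAh : 0 ≤ A + h := add_nonneg hA hh
  rw [Kernel.restrict_apply]
  by_cases hz : z ∈ Ioc x (x + h)
  · have hprogress := add_le_integral_min_max_sub hA hz (hdrift_int z hz) (hdrift z hz)
    rw [indicator_of_mem hz, Pi.one_apply, mul_one, killedLyapunov_of_mem hA hz]
    calc ENNReal.ofReal ε + ∫⁻ w in Iic (x + h), killedLyapunov A x h w ∂(P z)
        ≤ ENNReal.ofReal (ε + ∫ w, (A + h - min (max (w - x) 0) (A + h)) ∂(P z)) := by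
          rw [ENNReal.ofReal_add hε (integral_nonneg fun w => sub_nonneg.2 (min_le_right _ _))]
          gcongr
          exact setLIntegral_Iic_killedLyapunov_le hAh
      _ ≤ ENNReal.ofReal (A + h - (z - x)) := by
          gcongr
          rw [integral_sub (integrable_const _) (integrable_min_max_sub hAh), integral_const,
            probReal_univ, one_smul]
          linarith
  · rw [indicator_of_notMem hz, mul_zero, zero_add, killedLyapunov_of_notMem hAh hz]
    calc ∫⁻ w in Iic (x + h), killedLyapunov A x h w ∂(P z)
        ≤ ∫⁻ _ in Iic (x + h), ENNReal.ofReal (A + h) ∂(P z) :=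
          lintegral_mono (killedLyapunov_le hAh)
      _ ≤ ENNReal.ofReal (A + h) := by
          rw [setLIntegral_const]
          exact mul_le_of_le_one_right' prob_le_one

end KilledLyapunov

lemma occupation_killed_le {P : Kernel ℝ ℝ} [IsMarkovKernel P] {A ε x h : ℝ} (hA : 0 ≤ A)
    (hε : 0 < ε) (hh : 0 ≤ h)
    (hdrift_int : ∀ z ∈ Ioc x (x + h), Integrable (fun w => min (w - z) A) (P z))
    (hdrift : ∀ z ∈ Ioc x (x + h), ε ≤ ∫ w, min (w - z) A ∂(P z)) (n : ℕ) (z : ℝ) :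
    occupation (P.restrict (measurableSet_Iic (a := x + h))) (Ioc x (x + h)) n z
      ≤ ENNReal.ofReal ((A + h) / ε) := by
  rw [ENNReal.ofReal_div_of_pos hε, ENNReal.le_div_iff_mul_le
    (Or.inl (ENNReal.ofReal_pos.2 hε).ne') (Or.inl ENNReal.ofReal_ne_top), mul_comm]
  exact (mul_occupation_le_of_excessive measurableSet_Ioc
    (killedLyapunov_excessive hA hε.le hh hdrift_int hdrift) n z).trans
    (killedLyapunov_le (add_nonneg hA hh) z)

/-- Local boundedness of the renewal measure.  Let `P` be the transition kernel of a
Markov chain on `ℝ` whose jumps `ξ(z)` satisfy `E[min(ξ(z), A)] ≥ ε > 0` for all `z`,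
and such that from every state `z` the chain stays strictly above `z` forever with
probability at least `δ > 0` (expressed through the powers of the kernel restricted
to `(z, ∞)`).  Then the renewal measure
`H_y(x, x+h] = Σ_{n≥0} P{X_n ∈ (x, x+h] | X₀ = y} = Σ_{n≥0} Pⁿ(y, (x,x+h])`
satisfies `H_y(x, x+h] ≤ (A+h)/(ε δ)` for all `x, y` and `h > 0`. -/
theorem stmt11 (P : Kernel ℝ ℝ) [IsMarkovKernel P]
    (A ε δ : ℝ) (hA : 0 < A) (hε : 0 < ε) (hδ : 0 < δ)
    (hdrift_int : ∀ z : ℝ, Integrable (fun y => min (y - z) A) (P z))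
    (hdrift : ∀ z : ℝ, ε ≤ ∫ y, min (y - z) A ∂(P z))
    (hstay : ∀ z : ℝ, ∀ m : ℕ,
      ENNReal.ofReal δ ≤
        (kIterId (P.restrict (measurableSet_Ioi : MeasurableSet (Set.Ioi z))) m) z
          Set.univ) :
    ∀ x y : ℝ, ∀ h : ℝ, 0 < h →
      ∑' n : ℕ, (kIterId P n) y (Set.Ioc x (x + h))
        ≤ ENNReal.ofReal ((A + h) / (ε * δ)) := by
  intro x y h hh
  refine ENNReal.tsum_le_of_sum_range_le fun n => ?_
  set M := ⨆ z, occupation P (Ioc x (x + h)) n z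
  have hM_top : M ≠ ∞ :=
    ne_top_of_le_ne_top (ENNReal.natCast_ne_top n) (iSup_le fun z => occupation_le_card n z)
  have hexit : ∀ w ∉ Iic (x + h), occupation P (Ioc x (x + h)) n w + M * ENNReal.ofReal δ ≤ M :=
    fun w hw => by
      have hw' : x + h < w := not_le.1 hw
      refine (add_le_add_right (mul_le_mul_right ((hstay w n).trans ?_) _) _).trans
        (occupation_add_mul_survival_le measurableSet_Ioc measurableSet_Ioi Ioc_disjoint_Ioi_same
          (le_iSup _) hw')
      exact kIterId_restrict_mono _ _ (Ioi_subset_Ioi hw'.le) n w MeasurableSet.univ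
  have hMδ_top : M * ENNReal.ofReal δ ≠ ∞ := ENNReal.mul_ne_top hM_top ENNReal.ofReal_ne_top
  have hreturn : M ≤ ENNReal.ofReal ((A + h) / ε) + (M - M * ENNReal.ofReal δ) := iSup_le fun z =>
    (occupation_le_killed_add measurableSet_Ioc measurableSet_Iic
      (fun w hw => ENNReal.le_sub_of_add_le_right hMδ_top (hexit w hw)) z).trans <| add_le_add_left
      (occupation_killed_le hA.le hε hh.le (fun z _ => hdrift_int z) (fun z _ => hdrift z) n z) _
  have hMδ : M * ENNReal.ofReal δ ≤ ENNReal.ofReal ((A + h) / ε) := by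
    have hle : M * ENNReal.ofReal δ ≤ M := le_add_self.trans (hexit (x + h + 1) (by simp))
    rw [← ENNReal.sub_sub_cancel hM_top hle]
    exact tsub_le_iff_right.2 hreturn
  calc ∑ m ∈ Finset.range n, kIterId P m y (Ioc x (x + h)) ≤ M := le_iSup (occupation P _ n) y
    _ ≤ ENNReal.ofReal ((A + h) / ε) / ENNReal.ofReal δ := by
      rwa [ENNReal.le_div_iff_mul_le (Or.inl (ENNReal.ofReal_pos.2 hδ).ne')
        (Or.inl ENNReal.ofReal_ne_top)]
    _ = ENNReal.ofReal ((A + h) / (ε * δ)) := by rw [← ENNReal.ofReal_div_of_pos hδ, div_div]
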